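/- For all integers n ≥ 1, 2·F_{2n−1} − 5·F_{2n−2} = L_{4n−4} − 4·∑_{k=1}^{n−1} F_{2k}·L_{4n−4k−4}. -/

import Mathlib

def lucas : ℕ → ℕ
  | 0 => 2
  | 1 => 1
  | n + 2 => lucas (n + 1) + lucas n

/-!
Put `m = n - 1`. The sum is the convolution `S m = ∑_{i+j=m} F_{2i} L_{4j}` (the `i = 0` term
vanishes). In generating functions, `∑ F_{2i} xⁱ = x / (1 - 3x + x²)` and
`∑ L_{4j} xʲ = (2 - 7x) / (1 - 7x + x²)`, so since `1 - 3x + x² - 4x = 1 - 7x + x²` the sequence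
`L_{4m} - 4 S m` has generating function `(2 - 7x) / (1 - 3x + x²)`, which is that of
`2 F_{2m+1} - 5 F_{2m}`. Concretely, `L_{4j+8} = 7 L_{4j+4} - L_{4j}` gives a recurrence for `S`,
and a two-step induction finishes.
-/

open Finset Nat

lemma lucas_add_two (n : ℕ) : lucas (n + 2) = lucas (n + 1) + lucas n := rfl

lemma lucas_add_eight (n : ℕ) : (lucas (n + 8) : ℤ) = 7 * lucas (n + 4) - lucas n := by
  simp only [lucas_add_two]; push_cast; ring

def fibLucasConv (m : ℕ) : ℤ := ∑ p ∈ antidiagonal m, (fib (2 * p.1) : ℤ) * lucas (4 * p.2)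

lemma fibLucasConv_add_two (m : ℕ) :
    fibLucasConv (m + 2) =
      7 * fibLucasConv (m + 1) - fibLucasConv m + 2 * fib (2 * m + 4) - 7 * fib (2 * m + 2) := by
  have shifted : ∑ p ∈ antidiagonal m, (fib (2 * p.1) : ℤ) * lucas (4 * p.2 + 8) =
      7 * ∑ p ∈ antidiagonal m, (fib (2 * p.1) : ℤ) * lucas (4 * p.2 + 4) - fibLucasConv m := by
    rw [fibLucasConv, mul_sum, ← sum_sub_distrib]
    refine sum_congr rfl fun p _ => ?_
    rw [lucas_add_eight]; ring
  simp only [fibLucasConv, sum_antidiagonal_succ', mul_add, mul_zero, ← add_assoc, shifted]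
  norm_num [lucas, mul_add, add_mul, show 2 * (m + 1 + 1) = 2 * m + 4 by ring]
  ring

lemma fibLucasConv_eq_sum_Icc (m : ℕ) :
    fibLucasConv m = ∑ k ∈ Icc 1 m, (fib (2 * k) : ℤ) * lucas (4 * (m - k)) := by
  rw [fibLucasConv, sum_antidiagonal_eq_sum_range_succ_mk, range_eq_Ico,
    sum_eq_sum_Ico_succ_bot (succ_pos m), succ_eq_add_one, Ico_add_one_right_eq_Icc]
  simp

lemma two_mul_fib_sub_five_mul_fib (m : ℕ) :
    2 * (fib (2 * m + 1) : ℤ) - 5 * fib (2 * m) = lucas (4 * m) - 4 * fibLucasConv m := by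
  induction m using Nat.twoStepInduction with
  | zero => simp [fibLucasConv, lucas]
  | one => simp [fibLucasConv, lucas, sum_antidiagonal_succ, fib_add_two]
  | more m ih ih' =>
    have hL : (lucas (4 * (m + 2)) : ℤ) = 7 * lucas (4 * (m + 1)) - lucas (4 * m) := by
      rw [show 4 * (m + 2) = 4 * m + 8 by ring, show 4 * (m + 1) = 4 * m + 4 by ring,
        lucas_add_eight]
    have hF (j : ℕ) : (fib (j + 2) : ℤ) = fib (j + 1) + fib j := by
      push_cast [fib_add_two]; ring
    rw [hL, fibLucasConv_add_two]
    simp only [mul_add, ← add_assoc, hF] at ih' ⊢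
    linear_combination 7 * ih' - ih

theorem stmt14 (n : ℕ) (hn : 1 ≤ n) :
    2 * (Nat.fib (2 * n - 1) : ℤ) - 5 * (Nat.fib (2 * n - 2) : ℤ) =
      (lucas (4 * n - 4) : ℤ) -
        4 * ∑ k ∈ Finset.Icc 1 (n - 1), (Nat.fib (2 * k) : ℤ) * (lucas (4 * n - 4 * k - 4) : ℤ) := by
  obtain ⟨m, rfl⟩ : ∃ m, n = m + 1 := ⟨n - 1, by omega⟩
  have hsum : ∑ k ∈ Icc 1 m, (fib (2 * k) : ℤ) * lucas (4 * (m + 1) - 4 * k - 4) =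
      fibLucasConv m := by
    rw [fibLucasConv_eq_sum_Icc]
    exact sum_congr rfl fun k _ => by rw [show 4 * (m + 1) - 4 * k - 4 = 4 * (m - k) by omega]
  rw [Nat.add_sub_cancel, hsum, show 2 * (m + 1) - 1 = 2 * m + 1 by omega,
    show 2 * (m + 1) - 2 = 2 * m by omega, show 4 * (m + 1) - 4 = 4 * m by omega,
    two_mul_fib_sub_five_mul_fib]
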